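/- Let R be a TRS, s an operation-rooted term, and s ↝+_σ r a narrowing derivation (at least one step) whose associated resultant is the rewrite rule R' = σ(s) → r. If t rewrites to t' in one step using rule R' at some position p, then t rewrites to t' in one or more steps using the rules of R. -/

import Mathlib

namespace PE

/-- First-order terms in applicative form over constructors `C`,
defined operation symbols `F`, and natural-number variables. -/
inductive Tm (C F : Type) : Type
  | var : ℕ → Tm C F
  | con : C → Tm C F
  | op  : F → Tm C F
  | app : Tm C F → Tm C F → Tm C F

namespace Tm

variable {C F : Type}

/-- Application of a substitution. -/
def subst (σ : ℕ → Tm C F) : Tm C F → Tm C F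
  | var x => σ x
  | con c => con c
  | op f => op f
  | app s t => app (s.subst σ) (t.subst σ)

/-- The subterm at a position (positions are lists of left/right directions). -/
def subtermAt : Tm C F → List Bool → Option (Tm C F)
  | t, [] => some t
  | app s _, false :: p => s.subtermAt p
  | app _ t, true :: p => t.subtermAt p
  | _, _ => none

/-- Replacing the subterm at a position. -/
def replaceAt : Tm C F → List Bool → Tm C F → Tm C F
  | _, [], u => u
  | app s t, false :: p, u => app (s.replaceAt p u) t
  | app s t, true :: p, u => app s (t.replaceAt p u)
  | t, _ :: _, _ => t

/-- The set of variables of a term. -/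
def vars : Tm C F → Set ℕ
  | var x => {x}
  | con _ => ∅
  | op _ => ∅
  | app s t => s.vars ∪ t.vars

/-- Number of occurrences of a variable. -/
def varCount (x : ℕ) : Tm C F → ℕ
  | var y => if y = x then 1 else 0
  | con _ => 0
  | op _ => 0
  | app s t => s.varCount x + t.varCount x

/-- A term is linear if no variable occurs twice. -/
def Linear (t : Tm C F) : Prop := ∀ x, t.varCount x ≤ 1

/-- The head (root) symbol of a term, as a term. -/
def head : Tm C F → Tm C F
  | app s _ => s.head
  | t => t

/-- Number of arguments of the spine. -/
def numArgs : Tm C F → ℕ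
  | app s _ => s.numArgs + 1
  | _ => 0

/-- Operation-rooted term. -/
def OpRooted (t : Tm C F) : Prop := ∃ f : F, t.head = op f

/-- Constructor-rooted term. -/
def ConRooted (t : Tm C F) : Prop := ∃ c : C, t.head = con c

/-- A constructor term: no defined operation symbol occurs. -/
def NoOps : Tm C F → Prop
  | var _ => True
  | con _ => True
  | op _ => False
  | app s t => NoOps s ∧ NoOps t

/-- A pattern: a defined operation applied to constructor terms. -/
def IsPattern : Tm C F → Prop
  | op _ => True
  | app s t => IsPattern s ∧ NoOps t
  | _ => False

/-- The set of operation symbols occurring in a term. -/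
def opsIn : Tm C F → Set F
  | var _ => ∅
  | con _ => ∅
  | op f => {f}
  | app s t => s.opsIn ∪ t.opsIn

/-- The distinct variables of a term in left-to-right order. -/
def varList : Tm C F → List ℕ
  | var x => [x]
  | con _ => []
  | op _ => []
  | app s t => s.varList ++ (t.varList.filter (fun x => !(s.varList.contains x)))

end Tm

/-- Substitutions. -/
abbrev Subst (C F : Type) := ℕ → Tm C F

/-- The identity substitution. -/
def idS {C F : Type} : Subst C F := Tm.var

/-- Composition: apply `σ` first, then `τ`. -/
def compS {C F : Type} (σ τ : Subst C F) : Subst C F := fun x => (σ x).subst τ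

/-- Composition `φₖ ∘ ⋯ ∘ φ₁` of a list of substitutions (head applied first). -/
def compList {C F : Type} (φs : List (Subst C F)) : Subst C F :=
  fun x => φs.foldl (fun t φ => t.subst φ) (Tm.var x)

/-- The single-variable binding `{x ↦ u}`. -/
def single {C F : Type} (x : ℕ) (u : Tm C F) : Subst C F :=
  fun y => if y = x then u else Tm.var y

/-- A head symbol applied to a list of variables. -/
def appVars {C F : Type} (h : Tm C F) (xs : List ℕ) : Tm C F :=
  xs.foldl (fun t x => Tm.app t (Tm.var x)) h

/-- A constructor substitution: all bindings are constructor terms. -/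
def ConstrSubst {C F : Type} (σ : Subst C F) : Prop := ∀ x, (σ x).NoOps

/-- A rewrite rule `l → r`. -/
abbrev Rule (C F : Type) := Tm C F × Tm C F

/-- A term rewriting system. -/
abbrev TRS (C F : Type) := Set (Rule C F)

/-- Subsumption ordering: `t` is an instance of `s`. -/
def Subsumes {C F : Type} (s t : Tm C F) : Prop := ∃ σ : Subst C F, t = s.subst σ

def StrictSub {C F : Type} (s t : Tm C F) : Prop := Subsumes s t ∧ ¬ Subsumes t s

def Variant {C F : Type} (s t : Tm C F) : Prop := Subsumes s t ∧ Subsumes t s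

def RuleVariant {C F : Type} (r₁ r₂ : Rule C F) : Prop :=
  (∃ σ : Subst C F, r₂.1 = r₁.1.subst σ ∧ r₂.2 = r₁.2.subst σ) ∧
  (∃ τ : Subst C F, r₁.1 = r₂.1.subst τ ∧ r₁.2 = r₂.2.subst τ)

/-- A rewrite step with a given rule at a given position. -/
def RewriteAtRule {C F : Type} (r : Rule C F) (p : List Bool) (t t' : Tm C F) : Prop :=
  ∃ σ : Subst C F, t.subtermAt p = some (r.1.subst σ) ∧ t' = t.replaceAt p (r.2.subst σ)

/-- One rewrite step in a TRS. -/
def Rew {C F : Type} (R : TRS C F) (t t' : Tm C F) : Prop :=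
  ∃ r ∈ R, ∃ p, RewriteAtRule r p t t'

def RewStar {C F : Type} (R : TRS C F) : Tm C F → Tm C F → Prop :=
  Relation.ReflTransGen (Rew R)

def RewPlus {C F : Type} (R : TRS C F) : Tm C F → Tm C F → Prop :=
  Relation.TransGen (Rew R)

/-- A redex: an instance of a left-hand side. -/
def IsRedex {C F : Type} (R : TRS C F) (t : Tm C F) : Prop :=
  ∃ r ∈ R, ∃ σ : Subst C F, t = r.1.subst σ

/-- Root-stable (head-normal form): cannot be rewritten to a redex. -/
def RootStable {C F : Type} (R : TRS C F) (t : Tm C F) : Prop :=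
  ∀ u, RewStar R t u → ¬ IsRedex R u

/-- Root-normalizing: has a root-stable reduct. -/
def RootNormalizing {C F : Type} (R : TRS C F) (t : Tm C F) : Prop :=
  ∃ u, RewStar R t u ∧ RootStable R u

/-- A left-linear constructor-based TRS (a functional logic program). -/
def LLCB {C F : Type} (R : TRS C F) : Prop :=
  ∀ r ∈ R, r.1.Linear ∧ r.1.IsPattern ∧ r.2.vars ⊆ r.1.vars

/-- A rewrite step at a position strictly below the root. -/
def InnerRew {C F : Type} (R : TRS C F) (t t' : Tm C F) : Prop :=
  ∃ r ∈ R, ∃ p, p ≠ [] ∧ RewriteAtRule r p t t'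

/-- Weakly orthogonal: left-linear and all critical pairs are trivial. -/
def WeaklyOrthogonal {C F : Type} (R : TRS C F) : Prop :=
  (∀ r ∈ R, r.1.Linear) ∧
  ∀ r ∈ R, ∀ r' ∈ R, ∀ (p : List Bool) (u : Tm C F) (σ σ' : Subst C F),
    r.1.subtermAt p = some u → (∀ x, u ≠ Tm.var x) →
    u.subst σ = r'.1.subst σ' →
    (r.1.subst σ).replaceAt p (r'.2.subst σ') = r.2.subst σ

/-- Almost orthogonal: left-linear and all critical pairs are trivial overlays. -/
def AlmostOrthogonal {C F : Type} (R : TRS C F) : Prop :=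
  (∀ r ∈ R, r.1.Linear) ∧
  ∀ r ∈ R, ∀ r' ∈ R, ∀ (p : List Bool) (u : Tm C F) (σ σ' : Subst C F),
    r.1.subtermAt p = some u → (∀ x, u ≠ Tm.var x) →
    u.subst σ = r'.1.subst σ' →
    p = [] ∧ r.2.subst σ = r'.2.subst σ'

/- ### Definitional trees -/

def IsMinimum {C F : Type} (T : Set (Tm C F)) (π : Tm C F) : Prop :=
  π ∈ T ∧ ∀ t ∈ T, Subsumes π t

def IsMaximalIn {C F : Type} (T : Set (Tm C F)) (t : Tm C F) : Prop :=
  t ∈ T ∧ ∀ u ∈ T, ¬ StrictSub t u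

/-- `π'` is a child of `π` in `T`: an immediate successor with no pattern strictly between. -/
def IsChildIn {C F : Type} (T : Set (Tm C F)) (π π' : Tm C F) : Prop :=
  π ∈ T ∧ π' ∈ T ∧ StrictSub π π' ∧
    ¬ ∃ π'' : Tm C F, π''.IsPattern ∧ π''.Linear ∧ StrictSub π π'' ∧ StrictSub π'' π'

/-- `xs` is a list of fresh pairwise distinct variables w.r.t. `π`. -/
def conAppFresh {C F : Type} (π : Tm C F) (_c : C) (xs : List ℕ) : Prop :=
  xs.Nodup ∧ ∀ x ∈ xs, x ∉ π.vars

/-- `T` is a definitional tree of the finite set `S` of linear patterns. -/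
def IsDefTreeOf {C F : Type} (T S : Set (Tm C F)) : Prop :=
  T.Nonempty ∧ T.Finite ∧
  (∀ t ∈ T, t.Linear ∧ t.IsPattern) ∧
  -- Root property
  (∃ π, IsMinimum T π) ∧
  -- Leaves property: the maximal elements of T are exactly the elements of S
  (∀ t ∈ T, (t ∈ S ↔ IsMaximalIn T t)) ∧ S ⊆ T ∧
  -- Parent property
  (∀ π' ∈ T, ¬ IsMinimum T π' → ∃! π, IsChildIn T π π') ∧
  -- Induction property
  (∀ π ∈ T, ¬ IsMaximalIn T π →
    ∃ (o : List Bool) (x : ℕ), π.subtermAt o = some (Tm.var x) ∧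
      (∀ π', IsChildIn T π π' →
        ∃ c xs, conAppFresh π c xs ∧ π' = π.replaceAt o (appVars (Tm.con c) xs)) ∧
      (∀ π₁ π₂, IsChildIn T π π₁ → IsChildIn T π π₂ →
        ∀ c₁ xs₁ c₂ xs₂, π₁ = π.replaceAt o (appVars (Tm.con c₁) xs₁) →
          π₂ = π.replaceAt o (appVars (Tm.con c₂) xs₂) → c₁ = c₂ → π₁ = π₂))

/-- `T` is a definitional tree for the defined function `f` of the TRS `R`. -/
def IsDefTreeFor {C F : Type} (R : TRS C F) (f : F) (T : Set (Tm C F)) : Prop :=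
  ∃ S : Set (Tm C F),
    IsDefTreeOf T S ∧
    (∀ l ∈ S, ∃ lr ∈ R, lr.1.head = Tm.op f ∧ Variant lr.1 l) ∧
    (∀ lr ∈ R, lr.1.head = Tm.op f → ∃ l ∈ S, Variant lr.1 l) ∧
    (∃ xs : List ℕ, xs.Nodup ∧ IsMinimum T (appVars (Tm.op f) xs))

/-- An inductively sequential TRS: every defined function has a definitional tree. -/
def InductivelySequential {C F : Type} (R : TRS C F) : Prop :=
  LLCB R ∧ ∀ f : F, (∃ r ∈ R, r.1.head = Tm.op f) → ∃ T, IsDefTreeFor R f T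

/-- An inductively sequential program: rules together with a fixed definitional
tree for each defined function. -/
structure ISProg (C F : Type) where
  rules : TRS C F
  llcb : LLCB rules
  dt : F → Set (Tm C F)
  dt_ok : ∀ f : F, (∃ r ∈ rules, r.1.head = Tm.op f) → IsDefTreeFor rules f (dt f)

/-- The subtree of `T` whose patterns are the instances of `πi`. -/
def subtree {C F : Type} (T : Set (Tm C F)) (πi : Tm C F) : Set (Tm C F) :=
  {π' ∈ T | Subsumes πi π'}

/-- `o` is the inductive position of the branch node `π` in `T`. -/
def InductivePosOf {C F : Type} (T : Set (Tm C F)) (π : Tm C F) (o : List Bool) : Prop :=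
  (∃ x, π.subtermAt o = some (Tm.var x)) ∧
  ∀ π', IsChildIn T π π' →
    ∃ c xs, conAppFresh π c xs ∧ π' = π.replaceAt o (appVars (Tm.con c) xs)

/- ### The needed narrowing strategy λ -/

/-- The needed narrowing strategy `λ(t, T)`, as a relation: `NN P t T p r φs` means
`(p, r, φₖ ∘ ⋯ ∘ φ₁) ∈ λ(t, T)` with canonical local substitutions `φs` (head first). -/
inductive NN {C F : Type} (P : ISProg C F) :
    Tm C F → Set (Tm C F) → List Bool → Rule C F → List (Subst C F) → Prop where
  | leaf (t π r : Tm C F)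
      (hrule : ∃ lr ∈ P.rules, RuleVariant lr (π, r)) :
      NN P t {π} [] (π, r) [idS]
  | branchVar (t : Tm C F) (T : Set (Tm C F)) (π : Tm C F) (o : List Bool)
      (x : ℕ) (c : C) (xs : List ℕ) (πi : Tm C F) (p : List Bool) (r : Rule C F)
      (φs : List (Subst C F))
      (hmin : IsMinimum T π) (hbr : ¬ IsMaximalIn T π)
      (hip : InductivePosOf T π o)
      (hchild : IsChildIn T π πi)
      (hfresh : conAppFresh π c xs)
      (hform : πi = π.replaceAt o (appVars (Tm.con c) xs))
      (hvar : t.subtermAt o = some (Tm.var x))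
      (hrec : NN P (t.subst (single x (appVars (Tm.con c) xs))) (subtree T πi) p r φs) :
      NN P t T p r (single x (appVars (Tm.con c) xs) :: φs)
  | branchCon (t : Tm C F) (T : Set (Tm C F)) (π : Tm C F) (o : List Bool)
      (u : Tm C F) (c : C) (xs : List ℕ) (πi : Tm C F) (p : List Bool) (r : Rule C F)
      (φs : List (Subst C F))
      (hmin : IsMinimum T π) (hbr : ¬ IsMaximalIn T π)
      (hip : InductivePosOf T π o)
      (hchild : IsChildIn T π πi)
      (hfresh : conAppFresh π c xs)
      (hform : πi = π.replaceAt o (appVars (Tm.con c) xs))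
      (hsub : t.subtermAt o = some u) (hhead : u.head = Tm.con c)
      (hrec : NN P t (subtree T πi) p r φs) :
      NN P t T p r (idS :: φs)
  | branchOp (t : Tm C F) (T : Set (Tm C F)) (π : Tm C F) (o : List Bool)
      (u : Tm C F) (g : F) (p : List Bool) (r : Rule C F) (φs : List (Subst C F))
      (hmin : IsMinimum T π) (hbr : ¬ IsMaximalIn T π)
      (hip : InductivePosOf T π o)
      (hsub : t.subtermAt o = some u) (hhead : u.head = Tm.op g)
      (hrec : NN P u (P.dt g) p r φs) :
      NN P t T (o ++ p) r (idS :: φs)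

/-- `(p, r, σ)` is a needed narrowing step for the operation-rooted term `t`. -/
def NNStepTriple {C F : Type} (P : ISProg C F) (t : Tm C F)
    (p : List Bool) (r : Rule C F) (σ : Subst C F) : Prop :=
  ∃ (f : F) (φs : List (Subst C F)),
    t.head = Tm.op f ∧ NN P t (P.dt f) p r φs ∧ σ = compList φs

/-- One needed narrowing step `t ↝_σ t'`. -/
def NNRed {C F : Type} (P : ISProg C F) (t : Tm C F) (σ : Subst C F) (t' : Tm C F) : Prop :=
  ∃ p r, NNStepTriple P t p r σ ∧ RewriteAtRule r p (t.subst σ) t'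

/-- A needed narrowing derivation `t ↝*_σ t'` with composed answer substitution. -/
inductive NNDeriv {C F : Type} (P : ISProg C F) : Tm C F → Subst C F → Tm C F → Prop where
  | refl (t : Tm C F) : NNDeriv P t idS t
  | step {t t₁ t₂ : Tm C F} {σ τ : Subst C F} :
      NNRed P t σ t₁ → NNDeriv P t₁ τ t₂ → NNDeriv P t (compS σ τ) t₂

/-- The strategy λ yields at most one step for `t` (a deterministic step). -/
def Deterministic {C F : Type} (P : ISProg C F) (t : Tm C F) : Prop :=
  ∀ p₁ r₁ σ₁ p₂ r₂ σ₂, NNStepTriple P t p₁ r₁ σ₁ → NNStepTriple P t p₂ r₂ σ₂ →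
    p₁ = p₂ ∧ r₁ = r₂ ∧ σ₁ = σ₂

/-- Deterministically evaluable: every step in every needed narrowing derivation
issuing from `t` is deterministic. -/
def DetEvaluable {C F : Type} (P : ISProg C F) (t : Tm C F) : Prop :=
  ∀ u σ, NNDeriv P t σ u → Deterministic P u

/- ### Generic narrowing -/

/-- One narrowing step with answer `σ` (at a non-variable position). -/
def NarrowStep {C F : Type} (R : TRS C F) (t : Tm C F) (σ : Subst C F) (t' : Tm C F) : Prop :=
  ∃ r ∈ R, ∃ (p : List Bool) (u : Tm C F), t.subtermAt p = some u ∧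
    (∀ x, u ≠ Tm.var x) ∧ RewriteAtRule r p (t.subst σ) t'

/-- A narrowing derivation with at least one step, composing the answers. -/
inductive NarrowPlus {C F : Type} (R : TRS C F) : Tm C F → Subst C F → Tm C F → Prop where
  | single {t σ t'} : NarrowStep R t σ t' → NarrowPlus R t σ t'
  | cons {t σ t₁ τ t₂} : NarrowStep R t σ t₁ → NarrowPlus R t₁ τ t₂ →
      NarrowPlus R t (compS σ τ) t₂

/- ### Rewrite sequences with explicit step data, and descendants -/

/-- A rewrite sequence recording the positions and rules of its steps. -/
inductive RewSeq {C F : Type} (R : TRS C F) :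
    Tm C F → List (List Bool × Rule C F) → Tm C F → Prop where
  | refl (t : Tm C F) : RewSeq R t [] t
  | step {t t' t'' : Tm C F} {p : List Bool} {r : Rule C F}
      {steps : List (List Bool × Rule C F)} :
      r ∈ R → RewriteAtRule r p t t' → RewSeq R t' steps t'' →
      RewSeq R t ((p, r) :: steps) t''

/-- Descendants of position `v` under a rewrite step at `u` with rule `r`. -/
def descend {C F : Type} (u : List Bool) (r : Rule C F) (v : List Bool) :
    Set (List Bool) :=
  {w | (¬ u <+: v ∧ w = v) ∨
       (∃ (x : ℕ) (p q p' : List Bool), v = u ++ p ++ q ∧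
          r.1.subtermAt p = some (Tm.var x) ∧ r.2.subtermAt p' = some (Tm.var x) ∧
          w = u ++ p' ++ q)}

def descendSet {C F : Type} (s : List Bool × Rule C F) (P : Set (List Bool)) :
    Set (List Bool) :=
  ⋃ v ∈ P, descend s.1 s.2 v

def descendSeq {C F : Type} : List (List Bool × Rule C F) → Set (List Bool) → Set (List Bool)
  | [], P => P
  | s :: ss, P => descendSeq ss (descendSet s P)

/-- Fold a replacement of the subterms at a list of positions by `u`. -/
def replaceList {C F : Type} (t : Tm C F) (l : List (List Bool)) (u : Tm C F) : Tm C F :=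
  l.foldl (fun acc p => acc.replaceAt p u) t

/-- Every subterm at a `P`-position is non-root-stable. -/
def NonRS {C F : Type} (R : TRS C F) (P : Set (List Bool)) (t : Tm C F) : Prop :=
  ∀ q ∈ P, ∀ u, t.subtermAt q = some u → ¬ RootStable R u

/-- A derivation which never root-normalizes any subterm at (descendants of) the
tracked positions. -/
inductive NRN {C F : Type} (R : TRS C F) : Set (List Bool) → Tm C F → Tm C F → Prop where
  | refl {P : Set (List Bool)} {t : Tm C F} (h : NonRS R P t) : NRN R P t t
  | step {P : Set (List Bool)} {t t' t'' : Tm C F} {p : List Bool} {r : Rule C F}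
      (hr : r ∈ R) (hst : RewriteAtRule r p t t') (h0 : NonRS R P t)
      (hrec : NRN R (descendSet (p, r) P) t' t'') : NRN R P t t''

/-- A derivation which never contracts a redex at or below (a descendant of) the
tracked positions. -/
inductive NRI {C F : Type} (R : TRS C F) : Set (List Bool) → Tm C F → Tm C F → Prop where
  | refl {P : Set (List Bool)} {t : Tm C F} : NRI R P t t
  | step {P : Set (List Bool)} {t t' t'' : Tm C F} {p : List Bool} {r : Rule C F}
      (hr : r ∈ R) (hst : RewriteAtRule r p t t')
      (havoid : ∀ q ∈ P, ¬ q <+: p)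
      (hrec : NRI R (descendSet (p, r) P) t' t'') : NRI R P t t''

/-- The redex at position `p` of `t` is root-needed: it (or a descendant) is
contracted in every rewrite sequence from `t` to a root-stable term. -/
def RootNeeded {C F : Type} (R : TRS C F) (t : Tm C F) (p : List Bool) : Prop :=
  (∃ u, t.subtermAt p = some u ∧ IsRedex R u) ∧
  ∀ u, NRI R {p} t u → ¬ RootStable R u

/- ### The outermost-needed strategy φ -/

/-- The outermost-needed redex position `φ(t, T)`, as a relation. -/
inductive Phi {C F : Type} (P : ISProg C F) : Tm C F → Set (Tm C F) → List Bool → Prop where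
  | leaf (t π : Tm C F) : Phi P t {π} []
  | intoChild {t : Tm C F} {T : Set (Tm C F)} {π πi : Tm C F} {p : List Bool}
      (hmin : IsMinimum T π) (hbr : ¬ IsMaximalIn T π)
      (hchild : IsChildIn T π πi) (hsubs : Subsumes πi t)
      (hrec : Phi P t (subtree T πi) p) : Phi P t T p
  | intoOp {t : Tm C F} {T : Set (Tm C F)} {π : Tm C F} {o : List Bool}
      {u : Tm C F} {g : F} {p : List Bool}
      (hmin : IsMinimum T π) (hbr : ¬ IsMaximalIn T π)
      (hip : InductivePosOf T π o)
      (hsub : t.subtermAt o = some u) (hhead : u.head = Tm.op g)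
      (hrec : Phi P u (P.dt g) p) : Phi P t T (o ++ p)

/-- An outermost-needed rewrite sequence with explicit step data. -/
inductive ONSeq {C F : Type} (P : ISProg C F) :
    Tm C F → List (List Bool × Rule C F) → Tm C F → Prop where
  | refl (t : Tm C F) : ONSeq P t [] t
  | step {t t' t'' : Tm C F} {p : List Bool} {r : Rule C F}
      {steps : List (List Bool × Rule C F)}
      (hphi : ∃ f : F, t.head = Tm.op f ∧ Phi P t (P.dt f) p)
      (hr : r ∈ P.rules) (hst : RewriteAtRule r p t t')
      (hrec : ONSeq P t' steps t'') : ONSeq P t ((p, r) :: steps) t''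

/-- A needed narrowing derivation following a given list of positions and rules
(rules up to variants), with composed answer substitution. -/
inductive NNSeq {C F : Type} (P : ISProg C F) :
    Tm C F → List (List Bool × Rule C F) → Subst C F → Tm C F → Prop where
  | refl (t : Tm C F) : NNSeq P t [] idS t
  | step {t t₁ t₂ : Tm C F} {p : List Bool} {r rv : Rule C F} {σ τ : Subst C F}
      {steps : List (List Bool × Rule C F)} (f : F) (φs : List (Subst C F))
      (hhead : t.head = Tm.op f) (hnn : NN P t (P.dt f) p rv φs)
      (hvar : RuleVariant r rv) (hσ : σ = compList φs)
      (hst : RewriteAtRule rv p (t.subst σ) t₁)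
      (hrec : NNSeq P t₁ steps τ t₂) :
      NNSeq P t ((p, r) :: steps) (compS σ τ) t₂

/- ### Needed narrowing trees and partial evaluation -/

/-- `u` admits a needed narrowing step. -/
def CanNarrow {C F : Type} (P : ISProg C F) (u : Tm C F) : Prop :=
  ∃ p r σ u', NNStepTriple P u p r σ ∧ RewriteAtRule r p (u.subst σ) u'

/-- A non-failing leaf: a constructor term or a term which can be narrowed. -/
def NonFailing {C F : Type} (P : ISProg C F) (u : Tm C F) : Prop :=
  u.NoOps ∨ CanNarrow P u

/-- `NNTree P t fr`: `fr` is the frontier (list of leaves, each recorded with its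
number of steps and accumulated substitution) of a finite needed narrowing tree for
`t` in `P`, built by repeatedly expanding a leaf by all its needed narrowing steps. -/
inductive NNTree {C F : Type} (P : ISProg C F) :
    Tm C F → List (ℕ × Subst C F × Tm C F) → Prop where
  | root (t : Tm C F) : NNTree P t [(0, idS, t)]
  | expand {t : Tm C F} {pre post : List (ℕ × Subst C F × Tm C F)}
      {n : ℕ} {σ : Subst C F} {u : Tm C F}
      (succs : List (ℕ × Subst C F × Tm C F))
      (htree : NNTree P t (pre ++ (n, σ, u) :: post))
      (hsucc : ∀ e, e ∈ succs ↔ ∃ p r σ' u', NNStepTriple P u p r σ' ∧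
          RewriteAtRule r p (u.subst σ') u' ∧ e = (n + 1, compS σ σ', u')) :
      NNTree P t (pre ++ succs ++ post)

/-- The resultants extracted from the non-failing leaves reached in at least one step. -/
def Resultants {C F : Type} (P : ISProg C F) (t : Tm C F)
    (fr : List (ℕ × Subst C F × Tm C F)) : TRS C F :=
  {lr | ∃ e ∈ fr, 0 < e.1 ∧ NonFailing P e.2.2 ∧ lr = (t.subst e.2.1, e.2.2)}

/- ### Independent renamings and closedness -/

/-- The renamed call `ρ(s) = f_s(x₁,…,xₙ)`. -/
def rhoTm {C F : Type} (fsym : Tm C F → F) (s : Tm C F) : Tm C F :=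
  appVars (Tm.op (fsym s)) s.varList

/-- `fsym` gives an independent renaming of `S`: fresh pairwise distinct symbols. -/
def IndepRenaming {C F : Type} (S : Set (Tm C F)) (fsym : Tm C F → F) : Prop :=
  Set.InjOn fsym S ∧ ∀ s ∈ S, ∀ u ∈ S, fsym s ∉ u.opsIn

def rhoSet {C F : Type} (S : Set (Tm C F)) (fsym : Tm C F → F) : Set (Tm C F) :=
  (rhoTm fsym) '' S

/-- Closedness of a term w.r.t. a set of calls `S`. -/
inductive Closed {C F : Type} (S : Set (Tm C F)) : Tm C F → Prop where
  | var (x : ℕ) : Closed S (Tm.var x)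
  | con (c : C) : Closed S (Tm.con c)
  | app {s t : Tm C F} (hc : ∃ c : C, s.head = Tm.con c)
      (hs : Closed S s) (ht : Closed S t) : Closed S (Tm.app s t)
  | inst {s : Tm C F} (θ : Subst C F) (hs : s ∈ S)
      (hθ : ∀ x ∈ s.vars, Closed S (θ x)) : Closed S (s.subst θ)

/-- The (non-deterministic) renaming function `ren_ρ`, as a relation. -/
inductive Ren {C F : Type} (S : Set (Tm C F)) (fsym : Tm C F → F) :
    Tm C F → Tm C F → Prop where
  | var (x : ℕ) : Ren S fsym (Tm.var x) (Tm.var x)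
  | con (c : C) : Ren S fsym (Tm.con c) (Tm.con c)
  | app {s t s' t' : Tm C F} (hc : ∃ c : C, s.head = Tm.con c)
      (hs : Ren S fsym s s') (ht : Ren S fsym t t') :
      Ren S fsym (Tm.app s t) (Tm.app s' t')
  | inst {s : Tm C F} (θ θ' : Subst C F) (hs : s ∈ S)
      (hθ : ∀ x ∈ s.vars, Ren S fsym (θ x) (θ' x)) :
      Ren S fsym (s.subst θ) ((rhoTm fsym s).subst θ')
  | other {t : Tm C F} (hop : t.OpRooted)
      (hni : ¬ ∃ s ∈ S, ∃ θ : Subst C F, t = s.subst θ) :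
      Ren S fsym t t

namespace Tm

variable {C F : Type}

theorem subst_subst (t : Tm C F) (σ τ : Subst C F) :
    (t.subst σ).subst τ = t.subst (compS σ τ) := by
  induction t <;> simp [subst, compS, *]

theorem subtermAt_subst {t u : Tm C F} {p : List Bool}
    (h : t.subtermAt p = some u) (θ : Subst C F) :
    (t.subst θ).subtermAt p = some (u.subst θ) := by
  induction p generalizing t with
  | nil => simp only [subtermAt, Option.some.injEq] at h; simp only [subtermAt, h]
  | cons b q ih =>
    cases t <;> cases b <;> simp only [subtermAt, subst, reduceCtorEq] at h ⊢ <;> exact ih h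

theorem replaceAt_subst {t u : Tm C F} {p : List Bool}
    (h : t.subtermAt p = some u) (v : Tm C F) (θ : Subst C F) :
    (t.replaceAt p v).subst θ = (t.subst θ).replaceAt p (v.subst θ) := by
  induction p generalizing t with
  | nil => simp only [replaceAt]
  | cons b q ih =>
    cases t <;> cases b <;> simp only [subtermAt, reduceCtorEq] at h <;>
      simp only [replaceAt, subst, ih h]

theorem subtermAt_append {t u : Tm C F} {p : List Bool}
    (h : t.subtermAt p = some u) (q : List Bool) :
    t.subtermAt (p ++ q) = u.subtermAt q := by
  induction p generalizing t with
  | nil => simp only [subtermAt, Option.some.injEq] at h; simp only [List.nil_append, h]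
  | cons b q' ih =>
    cases t <;> cases b <;> simp only [subtermAt, reduceCtorEq] at h <;> exact ih h

theorem replaceAt_append {t u : Tm C F} {p : List Bool}
    (h : t.subtermAt p = some u) (q : List Bool) (v : Tm C F) :
    t.replaceAt (p ++ q) v = t.replaceAt p (u.replaceAt q v) := by
  induction p generalizing t with
  | nil => simp only [subtermAt, Option.some.injEq] at h; simp only [List.nil_append, replaceAt, h]
  | cons b q' ih =>
    cases t <;> cases b <;> simp only [subtermAt, reduceCtorEq] at h <;>
      simp only [List.cons_append, replaceAt, ih h]

theorem subtermAt_replaceAt {t u : Tm C F} {p : List Bool}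
    (h : t.subtermAt p = some u) (v : Tm C F) :
    (t.replaceAt p v).subtermAt p = some v := by
  induction p generalizing t with
  | nil => simp only [replaceAt, subtermAt]
  | cons b q ih =>
    cases t <;> cases b <;> simp only [subtermAt, reduceCtorEq] at h <;>
      simp only [replaceAt, subtermAt, ih h]

theorem replaceAt_replaceAt {t u : Tm C F} {p : List Bool}
    (h : t.subtermAt p = some u) (v w : Tm C F) :
    (t.replaceAt p v).replaceAt p w = t.replaceAt p w := by
  induction p generalizing t with
  | nil => simp only [replaceAt]
  | cons b q ih =>
    cases t <;> cases b <;> simp only [subtermAt, reduceCtorEq] at h <;>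
      simp only [replaceAt, ih h]

end Tm

section Rewriting

variable {C F : Type} {R : TRS C F}

open Tm

theorem Rew.subst {t t' : Tm C F} (h : Rew R t t') (θ : Subst C F) :
    Rew R (t.subst θ) (t'.subst θ) := by
  obtain ⟨r, hr, p, τ, hred, rfl⟩ := h
  refine ⟨r, hr, p, compS τ θ, ?_, ?_⟩
  · rw [subtermAt_subst hred θ, subst_subst]
  · rw [replaceAt_subst hred, subst_subst]

theorem RewPlus.subst {t t' : Tm C F} (h : RewPlus R t t') (θ : Subst C F) :
    RewPlus R (t.subst θ) (t'.subst θ) := by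
  induction h with
  | single h => exact .single (h.subst θ)
  | tail _ h ih => exact ih.tail (h.subst θ)

theorem Rew.replaceAt {u u' t : Tm C F} {p : List Bool}
    (h : Rew R u u') (hu : t.subtermAt p = some u) :
    Rew R t (t.replaceAt p u') := by
  obtain ⟨r, hr, q, τ, hred, rfl⟩ := h
  exact ⟨r, hr, p ++ q, τ, by rw [subtermAt_append hu, hred], (replaceAt_append hu q _).symm⟩

theorem RewPlus.replaceAt {u u' t : Tm C F} {p : List Bool}
    (h : RewPlus R u u') (hu : t.subtermAt p = some u) :
    RewPlus R t (t.replaceAt p u') := by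
  induction h with
  | single h => exact .single (h.replaceAt hu)
  | @tail v w _ h ih =>
    have hstep := h.replaceAt (subtermAt_replaceAt hu v)
    rw [replaceAt_replaceAt hu] at hstep
    exact ih.tail hstep

theorem RewriteAtRule.rewPlus {l r t t' : Tm C F} {p : List Bool}
    (hlr : RewPlus R l r) (h : RewriteAtRule (l, r) p t t') : RewPlus R t t' := by
  obtain ⟨θ, hred, rfl⟩ := h
  exact (hlr.subst θ).replaceAt hred

theorem NarrowStep.rew {t t' : Tm C F} {σ : Subst C F} (h : NarrowStep R t σ t') :
    Rew R (t.subst σ) t' := by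
  obtain ⟨r, hr, p, -, -, -, hstep⟩ := h
  exact ⟨r, hr, p, hstep⟩

theorem NarrowPlus.rewPlus {t t' : Tm C F} {σ : Subst C F} (h : NarrowPlus R t σ t') :
    RewPlus R (t.subst σ) t' := by
  induction h with
  | single h => exact .single h.rew
  | @cons t σ t₁ τ t₂ h _ ih =>
    have hstep := h.rew.subst τ
    rw [subst_subst] at hstep
    exact .head hstep ih

end Rewriting

theorem stmt5_general {C F : Type} (R : TRS C F)
    (s : Tm C F) (σ : Subst C F) (rr : Tm C F)
    (hder : NarrowPlus R s σ rr)
    (t t' : Tm C F) (p : List Bool)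
    (hstep : RewriteAtRule (s.subst σ, rr) p t t') :
    RewPlus R t t' :=
  hstep.rewPlus hder.rewPlus

/-- a rewrite step with a resultant `σ(s) → r` of a narrowing
derivation `s ↝⁺_σ r` can be simulated by one or more rewrite steps in `R`. -/
theorem stmt5 {C F : Type} (R : TRS C F)
    (hR : ∀ r ∈ R, (∀ x, r.1 ≠ Tm.var x) ∧ r.2.vars ⊆ r.1.vars)
    (s : Tm C F) (hs : s.OpRooted) (σ : Subst C F) (rr : Tm C F)
    (hder : NarrowPlus R s σ rr)
    (t t' : Tm C F) (p : List Bool)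
    (hstep : RewriteAtRule (s.subst σ, rr) p t t') :
    RewPlus R t t' :=
  stmt5_general R s σ rr hder t t' p hstep

end PE
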